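/- Let (L, (h_1, …, h_m)) be a forward self-similar system such that L_x is connected for every infinite word x ∈ {1, …, m}^ℕ. Then L is connected if and only if for every pair i, j ∈ {1, …, m} there exist s ≥ 1 and i_1, …, i_s ∈ {1, …, m} with i_1 = i, i_s = j, and h_{i_t}(L) ∩ h_{i_{t+1}}(L) ≠ ∅ for every t = 1, …, s−1. -/

import Mathlib

open Set

/-- `h_{w̄}(L)` for a finite word `w = (w₁, …, w_k)`, encoded as the list `[w₁, …, w_k]`,
namely `h_{w₁}(h_{w₂}(⋯ h_{w_k}(L) ⋯))`, where `L` is the whole space. -/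
def fwdIm {L : Type*} {m : ℕ} (h : Fin m → L → L) : List (Fin m) → Set L
  | [] => Set.univ
  | a :: w => h a '' fwdIm h w

/-- The truncation `x|k` of an infinite word `x`. -/
def wordTrunc {m : ℕ} (x : ℕ → Fin m) (k : ℕ) : List (Fin m) :=
  List.ofFn fun i : Fin k => x i.val

/-- `L_x = ⋂_{j ≥ 1} h_{x₁}(h_{x₂}(⋯ h_{x_j}(L) ⋯))`. -/
def fwdLimSet {L : Type*} {m : ℕ} (h : Fin m → L → L) (x : ℕ → Fin m) : Set L :=
  ⋂ j : ℕ, fwdIm h (wordTrunc x (j + 1))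

set_option linter.unusedSectionVars false

section aux

variable {L : Type*} [MetricSpace L] [CompactSpace L] [Nonempty L]
  {m : ℕ} (h : Fin m → L → L)

lemma fwdIm_nonempty (w : List (Fin m)) : (fwdIm h w).Nonempty := by
  induction w with
  | nil => exact univ_nonempty
  | cons a w ih => exact ih.image _

lemma fwdIm_isCompact (hcont : ∀ j, Continuous (h j)) (w : List (Fin m)) :
    IsCompact (fwdIm h w) := by
  induction w with
  | nil => exact isCompact_univ
  | cons a w ih => exact ih.image (hcont a)

lemma fwdIm_append_singleton_subset (w : List (Fin m)) (a : Fin m) :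
    fwdIm h (w ++ [a]) ⊆ fwdIm h w := by
  induction w with
  | nil => exact subset_univ _
  | cons b w ih => exact Set.image_mono ih

lemma fwdIm_eq_iUnion (hcover : (⋃ j, Set.range (h j)) = Set.univ)
    (w : List (Fin m)) : fwdIm h w = ⋃ a, fwdIm h (w ++ [a]) := by
  induction w with
  | nil =>
    have hs : ∀ a : Fin m, fwdIm h (([] : List (Fin m)) ++ [a]) = Set.range (h a) := by
      intro a; simp [fwdIm]
    simp only [hs]
    exact hcover.symm
  | cons b w ih =>
    show h b '' fwdIm h w = _
    rw [ih, Set.image_iUnion]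
    rfl

lemma fwdIm_cross (w : List (Fin m)) {a b : Fin m}
    (hab : (Set.range (h a) ∩ Set.range (h b)).Nonempty) :
    (fwdIm h (w ++ [a]) ∩ fwdIm h (w ++ [b])).Nonempty := by
  induction w with
  | nil =>
    simpa [fwdIm, Set.image_univ] using hab
  | cons c w ih =>
    obtain ⟨y, hy1, hy2⟩ := ih
    exact ⟨h c y, Set.mem_image_of_mem _ hy1, Set.mem_image_of_mem _ hy2⟩

lemma exists_switch {P : ℕ → Prop} {n : ℕ} (h0 : P 0) (hn : ¬ P n) :
    ∃ t, t < n ∧ P t ∧ ¬ P (t + 1) := by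
  classical
  have hex : ∃ k, ¬ P k := ⟨n, hn⟩
  set k := Nat.find hex with hk
  have hkn : k ≤ n := Nat.find_min' hex hn
  have hk0 : k ≠ 0 := by
    intro h0'
    rw [hk] at h0'
    exact (Nat.find_spec hex) (by rw [h0']; exact h0)
  refine ⟨k - 1, by omega, ?_, ?_⟩
  · by_contra hP
    exact absurd (Nat.find_min' hex hP) (by omega)
  · have : k - 1 + 1 = k := by omega
    rw [this]
    exact Nat.find_spec hex

end aux

/-- For a forward self-similar system `(L, (h₁, …, h_m))` with every `L_x` connected,
`L` is connected iff any two generators are joined by a chain of generators whose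
consecutive images of `L` intersect. -/
theorem forward_connected_iff_chain
    {L : Type*} [MetricSpace L] [CompactSpace L] [Nonempty L]
    {m : ℕ} (hm : 1 ≤ m)
    (h : Fin m → L → L) (hcont : ∀ j, Continuous (h j))
    (hcover : (⋃ j, Set.range (h j)) = Set.univ)
    (hconn : ∀ x : ℕ → Fin m, IsConnected (fwdLimSet h x)) :
    ConnectedSpace L ↔
      ∀ i j : Fin m, ∃ (n : ℕ) (c : ℕ → Fin m), c 0 = i ∧ c n = j ∧
        ∀ t < n, (Set.range (h (c t)) ∩ Set.range (h (c (t + 1)))).Nonempty := by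
  classical
  set Rel : Fin m → Fin m → Prop := fun i j =>
    ∃ (n : ℕ) (c : ℕ → Fin m), c 0 = i ∧ c n = j ∧
      ∀ t < n, (Set.range (h (c t)) ∩ Set.range (h (c (t + 1)))).Nonempty with hRel
  have hbase : ∀ i j : Fin m, (Set.range (h i) ∩ Set.range (h j)).Nonempty → Rel i j := by
    intro i j hij
    refine ⟨1, fun t => if t = 0 then i else j, by simp, by simp, ?_⟩
    intro t ht
    have ht0 : t = 0 := by omega
    subst ht0
    simpa using hij
  have htrans : ∀ i j k : Fin m, Rel i j → Rel j k → Rel i k := by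
    rintro i j k ⟨n, c, hc0, hcn, hc⟩ ⟨n', c', hc'0, hc'n, hc'⟩
    refine ⟨n + n', fun t => if t < n then c t else c' (t - n), ?_, ?_, ?_⟩
    · by_cases h0 : 0 < n
      · simpa [h0] using hc0
      · have hn0 : n = 0 := by omega
        subst hn0
        show (if (0:ℕ) < 0 then c 0 else c' (0 - 0)) = i
        rw [if_neg h0]
        show c' 0 = i
        rw [hc'0, ← hcn]
        exact hc0
    · have : ¬ (n + n' < n) := by omega
      simp only [this, if_false]
      rw [Nat.add_sub_cancel_left, hc'n]
    · intro t ht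
      by_cases h1 : t + 1 < n
      · have h2 : t < n := by omega
        simpa [h1, h2] using hc t h2
      · by_cases h2 : t < n
        · have hn1 : t + 1 = n := by omega
          have he : c' (t + 1 - n) = c (t + 1) := by
            have h3 : t + 1 - n = 0 := by omega
            rw [h3, hc'0, ← hcn, hn1]
          simp only [h1, h2, if_true, if_false]
          rw [he]
          exact hc t h2
        · have ht' : t - n < n' := by omega
          have he : t + 1 - n = (t - n) + 1 := by omega
          simp only [h1, h2, if_false]
          rw [he]
          exact hc' (t - n) ht'
  constructor
  · -- connected ⟹ chain condition
    intro hL i j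
    by_contra hnot
    set S : Set (Fin m) := {k | Rel i k} with hS
    set U : Set L := ⋃ k ∈ S, Set.range (h k) with hU
    set V : Set L := ⋃ k ∈ Sᶜ, Set.range (h k) with hV
    have hUc : IsClosed U :=
      Set.Finite.isClosed_biUnion (Set.toFinite S)
        (fun k _ => (isCompact_range (hcont k)).isClosed)
    have hVc : IsClosed V :=
      Set.Finite.isClosed_biUnion (Set.toFinite Sᶜ)
        (fun k _ => (isCompact_range (hcont k)).isClosed)
    have hcov : (Set.univ : Set L) ⊆ U ∪ V := by
      intro z _
      have : z ∈ ⋃ k, Set.range (h k) := by rw [hcover]; trivial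
      obtain ⟨k, hk⟩ := Set.mem_iUnion.mp this
      by_cases hkS : k ∈ S
      · exact Or.inl (Set.mem_biUnion hkS hk)
      · exact Or.inr (Set.mem_biUnion hkS hk)
    have hUne : (Set.univ ∩ U).Nonempty := by
      obtain ⟨z, hz⟩ := Set.range_nonempty (h i)
      exact ⟨z, trivial, Set.mem_biUnion (by
        show Rel i i
        exact ⟨0, fun _ => i, rfl, rfl, fun t ht => absurd ht (Nat.not_lt_zero t)⟩) hz⟩
    have hVne : (Set.univ ∩ V).Nonempty := by
      obtain ⟨z, hz⟩ := Set.range_nonempty (h j)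
      exact ⟨z, trivial, Set.mem_biUnion hnot hz⟩
    obtain ⟨z, -, hzUV⟩ :=
      isPreconnected_closed_iff.mp isPreconnected_univ U V hUc hVc hcov hUne hVne
    obtain ⟨hzU, hzV⟩ := hzUV
    obtain ⟨k, hkS, hzk⟩ := Set.mem_iUnion₂.mp hzU
    obtain ⟨k', hk'S, hzk'⟩ := Set.mem_iUnion₂.mp hzV
    exact hk'S (htrans i k k' hkS (hbase k k' ⟨z, hzk, hzk'⟩))
  · -- chain condition ⟹ connected
    intro hchain
    have hpre : PreconnectedSpace L := by
      constructor
      rw [isPreconnected_closed_iff]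
      intro A B hA hB hcov hA' hB'
      by_contra hne
      have hdisj : A ∩ B = ∅ := by
        by_contra hd
        obtain ⟨z, hz⟩ := Set.nonempty_iff_ne_empty.mpr hd
        exact hne ⟨z, trivial, hz⟩
      have hdisj' : ∀ z : L, z ∈ A → z ∈ B → False := by
        intro z hzA hzB
        have : z ∈ A ∩ B := ⟨hzA, hzB⟩
        rw [hdisj] at this
        exact this
      have hcov' : ∀ z : L, z ∈ A ∨ z ∈ B := fun z => hcov trivial
      set Mixed : List (Fin m) → Prop := fun w =>
        (fwdIm h w ∩ A).Nonempty ∧ (fwdIm h w ∩ B).Nonempty with hMixed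
      -- every mixed word has a mixed child
      have hstep : ∀ w, Mixed w → ∃ a, Mixed (w ++ [a]) := by
        rintro w ⟨⟨p, hpF, hpA⟩, ⟨q, hqF, hqB⟩⟩
        by_contra hs
        push_neg at hs
        have hs' : ∀ a, ¬((fwdIm h (w ++ [a]) ∩ A).Nonempty ∧
            (fwdIm h (w ++ [a]) ∩ B).Nonempty) := hs
        have pure : ∀ a, fwdIm h (w ++ [a]) ⊆ A ∨ fwdIm h (w ++ [a]) ⊆ B := by
          intro a
          rcases not_and_or.mp (hs' a) with hsa | hsb
          · right
            intro z hz
            rcases hcov' z with hzA | hzB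
            · exact absurd ⟨z, hz, hzA⟩ hsa
            · exact hzB
          · left
            intro z hz
            rcases hcov' z with hzA | hzB
            · exact hzA
            · exact absurd ⟨z, hz, hzB⟩ hsb
        rw [fwdIm_eq_iUnion h hcover] at hpF hqF
        obtain ⟨a₀, ha₀⟩ := Set.mem_iUnion.mp hpF
        obtain ⟨b₀, hb₀⟩ := Set.mem_iUnion.mp hqF
        have hPa₀ : fwdIm h (w ++ [a₀]) ⊆ A := by
          rcases pure a₀ with hh | hh
          · exact hh
          · exact absurd (hdisj' p hpA (hh ha₀)) (fun hf => hf)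
        have hPb₀ : ¬ fwdIm h (w ++ [b₀]) ⊆ A := by
          intro hh
          exact hdisj' q (hh hb₀) hqB
        obtain ⟨n, c, hc0, hcn, hcc⟩ := hchain a₀ b₀
        obtain ⟨t, ht, hPt, hnPt⟩ :=
          exists_switch (P := fun t => fwdIm h (w ++ [c t]) ⊆ A)
            (by show fwdIm h (w ++ [c 0]) ⊆ A; rw [hc0]; exact hPa₀)
            (by show ¬ fwdIm h (w ++ [c n]) ⊆ A; rw [hcn]; exact hPb₀)
        obtain ⟨z, hz1, hz2⟩ := fwdIm_cross h w (hcc t ht)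
        rcases pure (c (t + 1)) with hh | hh
        · exact hnPt hh
        · exact hdisj' z (hPt hz1) (hh hz2)
      -- build an everywhere-mixed infinite word
      set pick : List (Fin m) → Fin m := fun w =>
        if hx : ∃ a, Mixed (w ++ [a]) then hx.choose else ⟨0, hm⟩ with hpick
      set l : ℕ → List (Fin m) := fun k => Nat.rec [] (fun _ w => w ++ [pick w]) k with hldef
      set x : ℕ → Fin m := fun k => pick (l k) with hx
      have hl : ∀ k, l (k + 1) = l k ++ [x k] := fun k => rfl
      have hMix : ∀ k, Mixed (l k) := by
        intro k
        induction k with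
        | zero =>
          constructor
          · show (fwdIm h [] ∩ A).Nonempty; simpa [fwdIm] using hA'
          · show (fwdIm h [] ∩ B).Nonempty; simpa [fwdIm] using hB'
        | succ k ih =>
          have hex : ∃ a, Mixed (l k ++ [a]) := hstep (l k) ih
          have : x k = hex.choose := by
            rw [hx]
            simp only [hpick, dif_pos hex]
          rw [hl k, this]
          exact hex.choose_spec
      have hwt : ∀ k, wordTrunc x k = l k := by
        intro k
        induction k with
        | zero => rfl
        | succ k ih =>
          rw [hl k, ← ih]
          show List.ofFn (fun i : Fin (k+1) => x i.val) = _
          rw [List.ofFn_succ']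
          simp only [List.concat_eq_append, Fin.coe_castSucc, Fin.val_last]
          rfl
      -- intersect with A and with B
      have hseq : ∀ C : Set L, IsClosed C → (∀ k, (fwdIm h (l k) ∩ C).Nonempty) →
          (fwdLimSet h x ∩ C).Nonempty := by
        intro C hC hne'
        have key := IsCompact.nonempty_iInter_of_sequence_nonempty_isCompact_isClosed
          (fun j => fwdIm h (l (j + 1)) ∩ C)
          (fun j => by
            show fwdIm h (l (j + 1 + 1)) ∩ C ⊆ fwdIm h (l (j + 1)) ∩ C
            rw [hl (j + 1)]
            exact Set.inter_subset_inter_left C (fwdIm_append_singleton_subset h _ _))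
          (fun j => hne' (j + 1))
          ((fwdIm_isCompact h hcont _).inter_right hC)
          (fun j => ((fwdIm_isCompact h hcont _).isClosed).inter hC)
        obtain ⟨z, hz⟩ := key
        refine ⟨z, ?_, (Set.mem_iInter.mp hz 0).2⟩
        rw [fwdLimSet]
        rw [Set.mem_iInter]
        intro j
        rw [hwt]
        exact (Set.mem_iInter.mp hz j).1
      have hxA : (fwdLimSet h x ∩ A).Nonempty := hseq A hA (fun k => (hMix k).1)
      have hxB : (fwdLimSet h x ∩ B).Nonempty := hseq B hB (fun k => (hMix k).2)
      obtain ⟨z, -, hz⟩ := isPreconnected_closed_iff.mp (hconn x).isPreconnected A B hA hB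
        (fun z _ => hcov' z) hxA hxB
      exact hdisj' z hz.1 hz.2
    exact { toPreconnectedSpace := hpre, toNonempty := inferInstance }
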